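/- arXiv:1310.0304 — 2 statements merged into one kernel-verified Lean document; each statement's English description precedes it below -/
import Mathlib

section
/- For every κ > 0 and every ε > 0 there exists δ ∈ (0, 1/2) such that for every compact metric measure space (X, υ) with X a geodesic space and (X, υ) satisfying the doubling condition for κ, every x ∈ X and every r > 0, one has υ(B_r(x) \ B_{(1−δ)r}(x)) ≤ ε · υ(B_r(x)). -/
open MeasureTheory Metric Filter Set
open scoped Topology NNReal ENNReal
open Classical

variable {X : Type*} [MetricSpace X]

/-- A real-valued function is Lipschitz (with some constant). -/
def IsLipFun (f : X → ℝ) : Prop := ∃ K : ℝ≥0, LipschitzWith K f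

/-- The pointwise Lipschitz constant `Lip f (x)`:
`0` if `x` is isolated, and otherwise the limit (= infimum, by monotonicity)
as `r → 0` of `sup_{y ∈ B_r(x), y ≠ x} |f x - f y| / dist x y`. -/
noncomputable def pLip (f : X → ℝ) (x : X) : ℝ :=
  if 𝓝[≠] x = ⊥ then 0
  else ⨅ r : Ioi (0:ℝ), sSup ((fun y => |f x - f y| / dist x y) '' (ball x r.1 \ {x}))

/-- `γ` is a (unit-speed) minimal geodesic from `x` to `y`. -/
def IsMinGeodesic (γ : ℝ → X) (x y : X) : Prop :=
  γ 0 = x ∧ γ (dist x y) = y ∧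
    ∀ s ∈ Icc (0:ℝ) (dist x y), ∀ t ∈ Icc (0:ℝ) (dist x y), dist (γ s) (γ t) = |s - t|

/-- A metric space is geodesic if any two points are joined by a minimal geodesic. -/
def IsGeodesicSpace (Y : Type*) [MetricSpace Y] : Prop :=
  ∀ x y : Y, ∃ γ : ℝ → Y, IsMinGeodesic γ x y

section MeasureDefs
variable [MeasurableSpace X] (υ : Measure X)

/-- The doubling condition for `κ`. -/
def DoublingFor (κ : ℝ) : Prop :=
  ∀ x : X, ∀ r : ℝ, 0 < r → υ (ball x (2*r)) ≤ (2:ℝ≥0∞) ^ κ * υ (ball x r)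

/-- The `(q,p)`-Poincaré inequality for `τ` (for Lipschitz functions). -/
def PoincareFor (q p τ : ℝ) : Prop :=
  ∀ x : X, ∀ r : ℝ, 0 < r → ∀ f : X → ℝ, IsLipFun f →
    (⨍ y in ball x r, |f y - ⨍ z in ball x r, f z ∂υ| ^ q ∂υ) ^ (1/q) ≤
      τ * r * ((⨍ y in ball x r, (pLip f y) ^ p ∂υ) ^ (1/p))

/-- `F_g(x,y)`: the infimum over minimal geodesics `γ` from `x` to `y` of
`∫_0^{d(x,y)} g(γ(s)) ds`. -/
noncomputable def segF (g : X → ℝ≥0∞) (x y : X) : ℝ≥0∞ :=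
  ⨅ γ ∈ {γ : ℝ → X | IsMinGeodesic γ x y}, ∫⁻ s in Icc (0:ℝ) (dist x y), g (γ s)

/-- The segment inequality for `lam`. -/
def SegmentIneqFor (lam : ℝ) : Prop :=
  ∀ x : X, ∀ r : ℝ, 0 < r → ∀ g : X → ℝ≥0∞, Measurable g →
    (∫⁻ pr in (ball x r) ×ˢ (ball x r), segF g pr.1 pr.2 ∂(υ.prod υ)) ≤
      ENNReal.ofReal (lam * r) * υ (ball x r) * ∫⁻ z in ball x (3*r), g z ∂υ

/-- The first eigenvalue of the `p`-Laplacian (`∞` if there is no competitor). -/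
noncomputable def lambda1 (p : ℝ) : ℝ≥0∞ :=
  ⨅ f ∈ {f : X → ℝ | IsLipFun f ∧ (∫ x, |f x| ^ p ∂υ) = 1 ∧
      (∫ x, |f x| ^ (p-2) * f x ∂υ) = 0},
    ENNReal.ofReal (∫ x, (pLip f x) ^ p ∂υ)

/-- Minkowski's exterior boundary measure
`υ⁺(A) = liminf_{r → 0+} (υ(B_r(A)) - υ(A))/r`. -/
noncomputable def minkBoundary (A : Set X) : ℝ≥0∞ :=
  Filter.liminf (fun r : ℝ => (υ (thickening r A) - υ A) / ENNReal.ofReal r) (𝓝[>] (0:ℝ))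

/-- The Cheeger constant (`∞` if there is no competitor). -/
noncomputable def cheeger : ℝ≥0∞ :=
  ⨅ A ∈ {A : Set X | MeasurableSet A ∧ 0 < υ A ∧ υ A ≤ 1/2}, minkBoundary υ A / υ A

/-- `λ_{1,p}` for `p ∈ [1, ∞)`, with `λ_{1,1} := h(X)` the Cheeger constant. -/
noncomputable def lam1 (p : ℝ) : ℝ≥0∞ := if p = 1 then cheeger υ else lambda1 υ p

/-- `c_p(f) = inf_{c ∈ ℝ} (∫ |f - c|^p dυ)^{1/p}`. -/
noncomputable def cP (p : ℝ) (f : X → ℝ) : ℝ :=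
  ⨅ c : ℝ, (∫ x, |f x - c| ^ p ∂υ) ^ (1/p)

/-- `M` is a median of `f`. -/
def IsMedian (f : X → ℝ) (M : ℝ) : Prop :=
  (1/2 : ℝ≥0∞) ≤ υ {x | M ≤ f x} ∧ (1/2 : ℝ≥0∞) ≤ υ {x | f x ≤ M}

end MeasureDefs

/-- The global Lipschitz constant `sup_{a ≠ b} |f a - f b| / dist a b`. -/
noncomputable def globalLip (f : X → ℝ) : ℝ :=
  sSup {L : ℝ | ∃ a b : X, a ≠ b ∧ L = |f a - f b| / dist a b}

/-! Along a geodesic from `x`, every point of the thin annulus `B_r \ B_{r-h}` lies within `3h/2`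
of the sphere `S(x, r - 3h/2)`, and the `h/2`-balls about points of that sphere lie in the next
annulus `B_{r-h} \ B_{r-2h}`. Covering the sphere by a maximal `h/2`-separated set and doubling
three times gives `υ(B_r \ B_{r-h}) ≤ C υ(B_{r-h} \ B_{r-2h})` with `C = 2^{3κ}`, i.e. the outer
half of an annulus carries at most the fraction `C/(C+1)` of it. Halving the width `n` times gives
`υ(B_r \ B_{(1-2^{-n})r}) ≤ (C/(C+1))^n υ(B_r)`, uniformly in the space, the centre and the radius.
-/

namespace ENNReal

lemma div_add_one_lt_one {C : ℝ≥0∞} (hC : C ≠ ⊤) : C / (C + 1) < 1 := by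
  rw [ENNReal.div_lt_iff (by simp) (by simp [hC]), one_mul]
  exact ENNReal.lt_add_right hC one_ne_zero

lemma le_div_add_one_mul_add {a b C : ℝ≥0∞} (hC : C ≠ ⊤) (h : a ≤ C * b) :
    a ≤ C / (C + 1) * (a + b) := by
  rw [mul_comm, ← mul_div_assoc, ENNReal.le_div_iff_mul_le (by simp) (by simp [hC])]
  calc a * (C + 1) = C * a + a := by ring
    _ ≤ C * a + C * b := by gcongr
    _ = (a + b) * C := by ring

end ENNReal

lemma TotallyBounded.exists_finset_separated_net {A : Set X} (hA : TotallyBounded A)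
    {ε : ℝ} (hε : 0 < ε) :
    ∃ S : Finset X, ↑S ⊆ A ∧ (S : Set X).Pairwise (fun p q => ε < dist p q) ∧
      ∀ a ∈ A, ∃ p ∈ S, dist a p ≤ ε := by
  lift ε to ℝ≥0 using hε.le
  have hε' : ε / 2 ≠ 0 := div_ne_zero (by exact_mod_cast hε.ne') two_ne_zero
  obtain ⟨N, -, hNfin, hN⟩ := exists_finite_isCover_of_totallyBounded hε' hA
  have hpack : packingNumber ε A ≠ ⊤ := by
    have := (packingNumber_two_mul_le_externalCoveringNumber (ε / 2) A).trans
      hN.externalCoveringNumber_le_encard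
    rw [mul_div_cancel₀ _ two_ne_zero] at this
    exact ne_top_of_le_ne_top hNfin.encard_lt_top.ne this
  have hfin : (maximalSeparatedSet ε A).Finite := by
    rw [← encard_ne_top_iff, encard_maximalSeparatedSet hpack]
    exact hpack
  refine ⟨hfin.toFinset, by simpa using maximalSeparatedSet_subset, ?_, fun a ha => ?_⟩
  · intro p hp q hq hpq
    have : (ε : ℝ≥0∞) < edist p q :=
      isSeparated_maximalSeparatedSet (by simpa using hp) (by simpa using hq) hpq
    rw [← not_le, edist_le_coe, not_le, ← NNReal.coe_lt_coe, coe_nndist] at this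
    exact this
  · obtain ⟨p, hp, hap⟩ := isCover_maximalSeparatedSet hpack ha
    refine ⟨p, by simpa using hp, ?_⟩
    rw [← coe_nndist, NNReal.coe_le_coe, ← edist_le_coe]
    exact hap

lemma IsGeodesicSpace.exists_mem_sphere_dist_eq (hgeo : IsGeodesicSpace X) (x y : X) {s : ℝ}
    (hs₀ : 0 ≤ s) (hs : s ≤ dist x y) : ∃ p ∈ sphere x s, dist y p = dist x y - s := by
  obtain ⟨γ, hγx, hγy, hγ⟩ := hgeo x y
  refine ⟨γ s, ?_, ?_⟩
  · have := hγ 0 ⟨le_rfl, dist_nonneg⟩ s ⟨hs₀, hs⟩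
    rw [mem_sphere, dist_comm, ← hγx, this, zero_sub, abs_neg, abs_of_nonneg hs₀]
  · have := hγ (dist x y) ⟨dist_nonneg, le_rfl⟩ s ⟨hs₀, hs⟩
    rw [← hγy, this, abs_of_nonneg (sub_nonneg.2 hs), hγy]

lemma ball_subset_ball_diff_ball_of_mem_sphere {x p : X} {c ρ : ℝ} (hp : p ∈ sphere x c) :
    ball p ρ ⊆ ball x (c + ρ) \ ball x (c - ρ) := by
  intro z hz
  rw [mem_sphere, dist_comm] at hp
  rw [mem_ball] at hz
  refine ⟨?_, fun hz' => ?_⟩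
  · rw [mem_ball]
    linarith [dist_triangle z p x, dist_comm p x]
  · rw [mem_ball, dist_comm] at hz'
    linarith [dist_triangle x z p]

section Doubling

variable [MeasurableSpace X] {υ : Measure X} {κ : ℝ}

lemma DoublingFor.measure_ball_two_pow_mul_le (hdbl : DoublingFor υ κ) (z : X) {s : ℝ}
    (hs : 0 < s) (n : ℕ) : υ (ball z (2 ^ n * s)) ≤ ((2 : ℝ≥0∞) ^ κ) ^ n * υ (ball z s) := by
  induction n with
  | zero => simp
  | succ n ih =>
    calc υ (ball z (2 ^ (n + 1) * s)) = υ (ball z (2 * (2 ^ n * s))) := by ring_nf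
      _ ≤ (2 : ℝ≥0∞) ^ κ * υ (ball z (2 ^ n * s)) := hdbl z _ (by positivity)
      _ ≤ (2 : ℝ≥0∞) ^ κ * (((2 : ℝ≥0∞) ^ κ) ^ n * υ (ball z s)) := by gcongr
      _ = ((2 : ℝ≥0∞) ^ κ) ^ (n + 1) * υ (ball z s) := by ring

end Doubling

noncomputable def annulusDecay (κ : ℝ) : ℝ≥0∞ :=
  ((2 : ℝ≥0∞) ^ κ) ^ 3 / (((2 : ℝ≥0∞) ^ κ) ^ 3 + 1)

lemma two_rpow_pow_three_ne_top (κ : ℝ) : ((2 : ℝ≥0∞) ^ κ) ^ 3 ≠ ⊤ :=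
  ENNReal.pow_ne_top (ENNReal.rpow_ne_top_of_ne_zero two_ne_zero ENNReal.ofNat_ne_top)

lemma annulusDecay_lt_one (κ : ℝ) : annulusDecay κ < 1 :=
  ENNReal.div_add_one_lt_one (two_rpow_pow_three_ne_top κ)

section Annulus

variable [ProperSpace X] [MeasurableSpace X] [OpensMeasurableSpace X] {υ : Measure X} {κ : ℝ}

lemma measure_ball_diff_ball_le_mul (hgeo : IsGeodesicSpace X) (hdbl : DoublingFor υ κ) (x : X)
    {r h : ℝ} (hh : 0 < h) (hr : 2 * h ≤ r) :
    υ (ball x r \ ball x (r - h)) ≤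
      ((2 : ℝ≥0∞) ^ κ) ^ 3 * υ (ball x (r - h) \ ball x (r - 2 * h)) := by
  obtain ⟨S, hS, hSsep, hScov⟩ :=
    (isCompact_sphere x (r - 3 * h / 2)).totallyBounded.exists_finset_separated_net (half_pos hh)
  have hnear : ball x r \ ball x (r - h) ⊆ ⋃ q ∈ S, ball q (2 ^ 3 * (h / 4)) := by
    rintro y ⟨hyr, hyh⟩
    rw [mem_ball, dist_comm] at hyr
    rw [mem_ball, dist_comm, not_lt] at hyh
    obtain ⟨p, hp, hyp⟩ :=
      hgeo.exists_mem_sphere_dist_eq x y (s := r - 3 * h / 2) (by linarith) (by linarith)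
    obtain ⟨q, hq, hpq⟩ := hScov p hp
    refine mem_biUnion hq (mem_ball.2 ?_)
    linarith [dist_triangle y p q]
  have hinner : ∀ q ∈ S, ball q (h / 4) ⊆ ball x (r - h) \ ball x (r - 2 * h) := by
    intro q hq
    have := ball_subset_ball_diff_ball_of_mem_sphere (ρ := h / 2) (hS hq)
    rw [show r - 3 * h / 2 + h / 2 = r - h by ring,
      show r - 3 * h / 2 - h / 2 = r - 2 * h by ring] at this
    exact (ball_subset_ball (by linarith)).trans this
  have hdisj : (S : Set X).PairwiseDisjoint (fun q => ball q (h / 4)) :=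
    fun p hp q hq hpq => ball_disjoint_ball (by linarith [hSsep hp hq hpq])
  calc υ (ball x r \ ball x (r - h)) ≤ ∑ q ∈ S, υ (ball q (2 ^ 3 * (h / 4))) :=
        (measure_mono hnear).trans (measure_biUnion_finset_le S _)
    _ ≤ ∑ q ∈ S, ((2 : ℝ≥0∞) ^ κ) ^ 3 * υ (ball q (h / 4)) :=
        Finset.sum_le_sum fun q _ => hdbl.measure_ball_two_pow_mul_le q (by positivity) 3
    _ = ((2 : ℝ≥0∞) ^ κ) ^ 3 * υ (⋃ q ∈ S, ball q (h / 4)) := by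
        rw [measure_biUnion_finset hdisj fun q _ => measurableSet_ball, Finset.mul_sum]
    _ ≤ ((2 : ℝ≥0∞) ^ κ) ^ 3 * υ (ball x (r - h) \ ball x (r - 2 * h)) := by
        gcongr
        exact iUnion₂_subset hinner

lemma measure_ball_diff_ball_le_annulusDecay_mul (hgeo : IsGeodesicSpace X)
    (hdbl : DoublingFor υ κ) (x : X) {r h : ℝ} (hh : 0 < h) (hr : 2 * h ≤ r) :
    υ (ball x r \ ball x (r - h)) ≤ annulusDecay κ * υ (ball x r \ ball x (r - 2 * h)) := by
  have hsplit : ball x r \ ball x (r - 2 * h) =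
      (ball x r \ ball x (r - h)) ∪ (ball x (r - h) \ ball x (r - 2 * h)) :=
    (sdiff_union_sdiff_cancel (ball_subset_ball (by linarith)) (ball_subset_ball (by linarith))).symm
  rw [hsplit, measure_union (disjoint_sdiff_left.mono_right sdiff_subset)
    (measurableSet_ball.diff measurableSet_ball)]
  exact ENNReal.le_div_add_one_mul_add (two_rpow_pow_three_ne_top κ)
    (measure_ball_diff_ball_le_mul hgeo hdbl x hh hr)

lemma measure_ball_diff_ball_le_annulusDecay_pow (hgeo : IsGeodesicSpace X)
    (hdbl : DoublingFor υ κ) (x : X) {r : ℝ} (hr : 0 < r) (n : ℕ) :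
    υ (ball x r \ ball x ((1 - (1 / 2) ^ n) * r)) ≤ annulusDecay κ ^ n * υ (ball x r) := by
  induction n with
  | zero => simp
  | succ n ih =>
    have hh : 0 < (1 / 2 : ℝ) ^ (n + 1) * r := by positivity
    have hhr : 2 * ((1 / 2 : ℝ) ^ (n + 1) * r) ≤ r := by
      rw [show 2 * ((1 / 2 : ℝ) ^ (n + 1) * r) = (1 / 2) ^ n * r by ring]
      exact mul_le_of_le_one_left hr.le (pow_le_one₀ (by norm_num) (by norm_num))
    calc υ (ball x r \ ball x ((1 - (1 / 2) ^ (n + 1)) * r))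
        = υ (ball x r \ ball x (r - (1 / 2) ^ (n + 1) * r)) := by ring_nf
      _ ≤ annulusDecay κ * υ (ball x r \ ball x (r - 2 * ((1 / 2) ^ (n + 1) * r))) :=
        measure_ball_diff_ball_le_annulusDecay_mul hgeo hdbl x hh hhr
      _ = annulusDecay κ * υ (ball x r \ ball x ((1 - (1 / 2) ^ n) * r)) := by ring_nf
      _ ≤ annulusDecay κ ^ (n + 1) * υ (ball x r) := by
        rw [pow_succ', mul_assoc]
        gcongr

end Annulus

/-- measures of thin annuli are uniformly small in doubling geodesic spaces. -/
theorem stmt10 :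
    ∀ κ : ℝ, 0 < κ → ∀ ε : ℝ, 0 < ε →
      ∃ δ : ℝ, δ ∈ Ioo (0:ℝ) (1/2) ∧
        ∀ (X : Type) [MetricSpace X] [CompactSpace X] [MeasurableSpace X] [BorelSpace X]
          (υ : Measure X), IsProbabilityMeasure υ → IsGeodesicSpace X → DoublingFor υ κ →
          ∀ x : X, ∀ r : ℝ, 0 < r →
            υ (ball x r \ ball x ((1 - δ) * r)) ≤ ENNReal.ofReal ε * υ (ball x r) := by
  intro κ _ ε hε
  obtain ⟨n, hnε, hn⟩ : ∃ n : ℕ, annulusDecay κ ^ n < ENNReal.ofReal ε ∧ 2 ≤ n :=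
    (((ENNReal.tendsto_pow_atTop_nhds_zero_of_lt_one (annulusDecay_lt_one κ)).eventually
      (gt_mem_nhds (ENNReal.ofReal_pos.2 hε))).and (eventually_ge_atTop 2)).exists
  refine ⟨(1 / 2) ^ n, ⟨by positivity, ?_⟩, fun X _ _ _ _ υ _ hgeo hdbl x r hr => ?_⟩
  · calc (1 / 2 : ℝ) ^ n ≤ (1 / 2) ^ 2 := pow_le_pow_of_le_one (by norm_num) (by norm_num) hn
      _ < 1 / 2 := by norm_num
  · calc υ (ball x r \ ball x ((1 - (1 / 2) ^ n) * r)) ≤ annulusDecay κ ^ n * υ (ball x r) :=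
          measure_ball_diff_ball_le_annulusDecay_pow hgeo hdbl x hr n
      _ ≤ ENNReal.ofReal ε * υ (ball x r) := by gcongr
end

section
/- Let 1 < p < ∞, τ > 0, and let (X, υ) be a compact metric measure space with more than one point satisfying the (p, p)-Poincaré inequality for τ. Then λ_{1,p}(X) ≥ (τ · diam X)^{−p}, where diam X is the diameter of X. -/
open MeasureTheory Metric Filter Set
open scoped Topology NNReal ENNReal
open Classical

variable {X : Type*} [MetricSpace X]

/-!
Fix an admissible `f` and any `c ∈ ℝ`. Convexity of `t ↦ |t|^p` gives
`|a - c|^p ≥ |a|^p - p c |a|^{p-2} a`; integrating and using `∫ |f|^{p-2} f = 0` yields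
`∫ |f - c|^p ≥ ∫ |f|^p = 1`, in particular for `c` the mean of `f`. A ball of radius `r > diam X` is all of `X`, so the Poincaré
inequality on it bounds `1` by `τ r (∫ (Lip f)^p)^{1/p}`; letting `r ↓ diam X` gives the claim.
-/

lemma convexOn_abs_rpow {p : ℝ} (hp : 1 ≤ p) : ConvexOn ℝ univ fun t : ℝ => |t| ^ p := by
  have himage : (fun t : ℝ => |t|) '' univ = Ici 0 := by
    ext s
    simp only [image_univ, mem_range, mem_Ici]
    exact ⟨fun ⟨t, ht⟩ => ht ▸ abs_nonneg t, fun hs => ⟨s, abs_of_nonneg hs⟩⟩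
  have habs : ConvexOn ℝ univ fun t : ℝ => |t| := convexOn_norm convex_univ
  have hpow := convexOn_rpow hp
  have hmono : MonotoneOn (fun x : ℝ => x ^ p) (Ici 0) := fun a ha b _ hab =>
    Real.rpow_le_rpow ha hab (by linarith)
  rw [← himage] at hpow hmono
  exact hpow.comp habs hmono

lemma ConvexOn.add_mul_sub_le_of_hasDerivAt {f : ℝ → ℝ} {f' x : ℝ} (hf : ConvexOn ℝ univ f)
    (hd : HasDerivAt f f' x) (y : ℝ) : f x + f' * (y - x) ≤ f y := by
  rcases lt_trichotomy x y with hxy | rfl | hxy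
  · have h := hf.le_slope_of_hasDerivAt (mem_univ x) (mem_univ y) hxy hd
    rw [slope_def_field, le_div_iff₀ (sub_pos.2 hxy)] at h
    linarith
  · simp
  · have h := hf.slope_le_of_hasDerivAt (mem_univ y) (mem_univ x) hxy hd
    rw [slope_def_field, div_le_iff₀ (sub_pos.2 hxy)] at h
    linarith

lemma abs_rpow_sub_mul_le_abs_sub_rpow {p : ℝ} (hp : 1 < p) (a c : ℝ) :
    |a| ^ p - p * c * (|a| ^ (p - 2) * a) ≤ |a - c| ^ p := by
  have h := (convexOn_abs_rpow hp.le).add_mul_sub_le_of_hasDerivAt (hasDerivAt_abs_rpow a hp)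
    (a - c)
  linarith

lemma continuous_abs_rpow_sub_two_mul {p : ℝ} (hp : 1 < p) :
    Continuous fun t : ℝ => |t| ^ (p - 2) * t := by
  have hderiv : deriv (fun t : ℝ => ‖t‖ ^ p) = fun t => p * (|t| ^ (p - 2) * t) :=
    funext fun t => by simpa [mul_assoc] using (hasDerivAt_abs_rpow t hp).deriv
  have h := (contDiff_norm_rpow (E := ℝ) hp).continuous_deriv le_rfl
  rw [hderiv] at h
  simpa [← mul_assoc, inv_mul_cancel₀ (by linarith : p ≠ 0)] using h.const_mul p⁻¹

lemma integral_abs_rpow_le_integral_abs_sub_rpow {α : Type*} [MeasurableSpace α]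
    {μ : Measure α} {p : ℝ} (hp : 1 < p) {f : α → ℝ} (c : ℝ)
    (hf : Integrable (fun x => |f x| ^ p) μ)
    (hf' : Integrable (fun x => |f x| ^ (p - 2) * f x) μ)
    (hfc : Integrable (fun x => |f x - c| ^ p) μ)
    (hmean : ∫ x, |f x| ^ (p - 2) * f x ∂μ = 0) :
    ∫ x, |f x| ^ p ∂μ ≤ ∫ x, |f x - c| ^ p ∂μ := by
  calc ∫ x, |f x| ^ p ∂μ = ∫ x, (|f x| ^ p - p * c * (|f x| ^ (p - 2) * f x)) ∂μ := by
        rw [integral_sub hf (hf'.const_mul _), integral_const_mul, hmean, mul_zero, sub_zero]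
    _ ≤ ∫ x, |f x - c| ^ p ∂μ :=
        integral_mono (hf.sub (hf'.const_mul _)) hfc fun _ =>
          abs_rpow_sub_mul_le_abs_sub_rpow hp _ _

lemma pLip_nonneg (f : X → ℝ) (x : X) : 0 ≤ pLip f x := by
  rw [pLip]
  split_ifs
  · exact le_rfl
  · have : Nonempty (Ioi (0 : ℝ)) := ⟨⟨1, mem_Ioi.2 one_pos⟩⟩
    refine le_ciInf fun r => Real.sSup_nonneg ?_
    rintro _ ⟨y, -, rfl⟩
    positivity

lemma Real.rpow_neg_le_of_one_le_mul_rpow_inv {p a b : ℝ} (hp : 0 < p) (ha : 0 < a)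
    (hb : 0 ≤ b) (h : 1 ≤ a * b ^ (1 / p)) : a ^ (-p) ≤ b := by
  have hinv : a⁻¹ ≤ b ^ (1 / p) := (inv_le_iff_one_le_mul₀' ha).2 h
  calc a ^ (-p) = a⁻¹ ^ p := by rw [Real.rpow_neg ha.le, Real.inv_rpow ha.le]
    _ ≤ (b ^ (1 / p)) ^ p := Real.rpow_le_rpow (inv_nonneg.2 ha.le) hinv hp.le
    _ = b := by rw [one_div, Real.rpow_inv_rpow hb hp.ne']

lemma PoincareFor.rpow_integral_le_mul_diam [BoundedSpace X] [Nonempty X] [MeasurableSpace X]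
    {υ : Measure X} [IsProbabilityMeasure υ] {q p τ : ℝ} (h : PoincareFor υ q p τ) {f : X → ℝ}
    (hf : IsLipFun f) :
    (∫ y, |f y - ∫ z, f z ∂υ| ^ q ∂υ) ^ (1 / q) ≤
      τ * diam (univ : Set X) * (∫ y, pLip f y ^ p ∂υ) ^ (1 / p) := by
  obtain ⟨x⟩ := ‹Nonempty X›
  have hlarge : ∀ r ∈ Ioi (diam (univ : Set X)), (∫ y, |f y - ∫ z, f z ∂υ| ^ q ∂υ) ^ (1 / q) ≤
      τ * r * (∫ y, pLip f y ^ p ∂υ) ^ (1 / p) := fun r hr => by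
    have hball : ball x r = univ := eq_univ_of_forall fun y =>
      (dist_le_diam_of_mem BoundedSpace.bounded_univ (mem_univ y) (mem_univ x)).trans_lt hr
    simpa only [hball, Measure.restrict_univ, average_eq_integral] using
      h x r (diam_nonneg.trans_lt hr) f hf
  refine ge_of_tendsto (x := 𝓝[>] diam (univ : Set X)) ?_ (eventually_nhdsWithin_of_forall hlarge)
  exact (Continuous.tendsto (by fun_prop) _).mono_left nhdsWithin_le_nhds

/-- lower bound for `λ_{1,p}` from a `(p,p)`-Poincaré inequality. -/
theorem stmt15 {X : Type*} [MetricSpace X] [CompactSpace X] [MeasurableSpace X] [BorelSpace X]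
    (υ : Measure X) [IsProbabilityMeasure υ]
    (p τ : ℝ) (hp : 1 < p) (hτ : 0 < τ) (hnt : ∃ x y : X, x ≠ y)
    (hpoin : PoincareFor υ p p τ) :
    ENNReal.ofReal ((τ * Metric.diam (Set.univ : Set X)) ^ (-p)) ≤ lambda1 υ p := by
  obtain ⟨x, y, hxy⟩ := hnt
  have : Nonempty X := ⟨x⟩
  have hdiam : 0 < diam (univ : Set X) :=
    diam_pos ⟨x, mem_univ x, y, mem_univ y, hxy⟩ BoundedSpace.bounded_univ
  have hint : ∀ g : X → ℝ, Continuous g → Integrable g υ := fun g hg =>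
    hg.integrable_of_hasCompactSupport (HasCompactSupport.of_compactSpace g)
  have hint_pow : ∀ g : X → ℝ, Continuous g → Integrable (fun x => |g x| ^ p) υ := fun g hg =>
    hint _ (hg.abs.rpow_const fun _ => .inr (by linarith))
  refine le_iInf₂ fun f ⟨hfLip, hnorm, hmean⟩ => ENNReal.ofReal_le_ofReal ?_
  have hf : Continuous f := let ⟨_, hK⟩ := hfLip; hK.continuous
  have hvar : 1 ≤ ∫ x, |f x - ∫ z, f z ∂υ| ^ p ∂υ := hnorm ▸
    integral_abs_rpow_le_integral_abs_sub_rpow hp _ (hint_pow f hf)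
      (hint _ ((continuous_abs_rpow_sub_two_mul hp).comp hf))
      (hint_pow _ (hf.sub continuous_const)) hmean
  refine Real.rpow_neg_le_of_one_le_mul_rpow_inv (by linarith) (by positivity)
    (integral_nonneg fun x => Real.rpow_nonneg (pLip_nonneg f x) p) ?_
  calc (1 : ℝ) ≤ (∫ x, |f x - ∫ z, f z ∂υ| ^ p ∂υ) ^ (1 / p) :=
        Real.one_le_rpow hvar (by positivity)
    _ ≤ _ := hpoin.rpow_integral_le_mul_diam hfLip
end
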